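/- arXiv:1405.5027 — 2 statements merged into one kernel-verified Lean document; each statement's English description precedes it below -/
import Mathlib

section
/- For every λ > 0, the integral of x·φ(x)²·Φ(x/λ) over the real line equals 1/(4π·√(1+2λ²)). -/
open Real MeasureTheory

noncomputable def phi (x : ℝ) : ℝ := (1 / Real.sqrt (2 * Real.pi)) * Real.exp (-x ^ 2 / 2)

noncomputable def Phi (x : ℝ) : ℝ := ∫ t in Set.Iic x, phi t

/-!
Write `Φ (x / λ) = ∫ φ t · 1{λ t ≤ x} dt` and swap the integrals. Since `x e^{-x²}` has
the primitive `-e^{-x²}/2`, the inner integral is `∫_{λt}^∞ x φ(x)² dx = e^{-λ²t²} / (4π)`,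
and what remains, `∫ φ(t) e^{-λ²t²} dt = 1 / √(1 + 2λ²)`, is a Gaussian integral.
-/

open Set Filter

lemma phi_sq (x : ℝ) : phi x ^ 2 = (2 * π)⁻¹ * exp (-x ^ 2) := by
  rw [phi, mul_pow, div_pow, sq_sqrt (by positivity), ← exp_nat_mul]
  ring_nf

lemma phi_eq_mul_exp (x : ℝ) : phi x = (√(2 * π))⁻¹ * exp (-(1 / 2) * x ^ 2) := by
  rw [phi]; ring_nf

lemma integrable_phi : Integrable phi := by
  rw [funext phi_eq_mul_exp]
  exact (integrable_exp_neg_mul_sq (by norm_num)).const_mul _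

lemma integral_Ioi_mul_exp_neg_mul_sq {b : ℝ} (hb : 0 < b) (a : ℝ) :
    ∫ x in Ioi a, x * exp (-b * x ^ 2) = exp (-b * a ^ 2) / (2 * b) := by
  have hderiv (x : ℝ) :
      HasDerivAt (fun y ↦ -exp (-b * y ^ 2) / (2 * b)) (x * exp (-b * x ^ 2)) x := by
    refine (((hasDerivAt_pow 2 x).const_mul (-b)).exp.fun_neg.div_const (2 * b)).congr_deriv ?_
    field_simp
    ring
  have hlim : Tendsto (fun y ↦ -exp (-b * y ^ 2) / (2 * b)) atTop (nhds 0) := by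
    have := tendsto_exp_atBot.comp
      ((tendsto_pow_atTop two_ne_zero).const_mul_atTop_of_neg (neg_lt_zero.2 hb))
    simpa using (this.neg.div_const (2 * b))
  rw [integral_Ioi_of_hasDerivAt_of_tendsto' (fun x _ ↦ hderiv x)
    (integrable_mul_exp_neg_mul_sq hb).integrableOn hlim]
  ring

lemma setIntegral_Ici_mul_phi_sq (a : ℝ) :
    ∫ x in Ici a, x * phi x ^ 2 = (4 * π)⁻¹ * exp (-a ^ 2) := by
  have := integral_Ioi_mul_exp_neg_mul_sq one_pos a
  simp only [neg_mul, one_mul] at this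
  simp_rw [integral_Ici_eq_integral_Ioi, phi_sq, mul_left_comm _ (2 * π)⁻¹,
    integral_const_mul, this]
  ring

/-- For `1 + 2 * b ≤ 0` both sides are junk zeros: the integrand is not integrable and
`√(1 + 2 * b) = 0`. -/
lemma integral_phi_mul_exp_neg_mul_sq (b : ℝ) :
    ∫ t, phi t * exp (-b * t ^ 2) = 1 / √(1 + 2 * b) := by
  have hexp (t : ℝ) :
      phi t * exp (-b * t ^ 2) = (√(2 * π))⁻¹ * exp (-(1 / 2 + b) * t ^ 2) := by
    rw [phi_eq_mul_exp, mul_assoc, ← exp_add]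
    ring_nf
  have h2 : √(1 + 2 * b) = √2 * √(1 / 2 + b) := by
    rw [← sqrt_mul zero_le_two]; ring_nf
  simp_rw [hexp, integral_const_mul, integral_gaussian, sqrt_div pi_pos.le,
    sqrt_mul zero_le_two, h2]
  have : √π ≠ 0 := (sqrt_pos.2 pi_pos).ne'
  field_simp

lemma integral_mul_Phi_div {f : ℝ → ℝ} (hf : Integrable f) {lam : ℝ} (hlam : 0 < lam) :
    ∫ x, f x * Phi (x / lam) = ∫ t, phi t * ∫ x in Ici (lam * t), f x := by
  set s : Set (ℝ × ℝ) := {p | lam * p.2 ≤ p.1}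
  have hs : MeasurableSet s := measurableSet_le (by fun_prop) (by fun_prop)
  let F : ℝ → ℝ → ℝ := fun x t ↦ s.indicator (fun p ↦ f p.1 * phi p.2) (x, t)
  have hF : Integrable (Function.uncurry F) (volume.prod volume) :=
    (hf.mul_prod integrable_phi).indicator hs
  have hx (x : ℝ) : f x * Phi (x / lam) = ∫ t, F x t := by
    rw [Phi, ← integral_const_mul, ← integral_indicator measurableSet_Iic]
    congr 1 with t
    simp [F, s, indicator_apply, le_div_iff₀ hlam, mul_comm t]
  have ht (t : ℝ) : ∫ x, F x t = phi t * ∫ x in Ici (lam * t), f x := by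
    rw [← integral_const_mul, ← integral_indicator measurableSet_Ici]
    congr 1 with x
    simp [F, s, indicator_apply, mul_comm]
  simp_rw [hx, integral_integral_swap hF, ht]

lemma integrable_mul_phi_sq : Integrable fun x : ℝ ↦ x * phi x ^ 2 := by
  simp_rw [phi_sq, mul_left_comm _ (2 * π)⁻¹]
  simpa using (integrable_mul_exp_neg_mul_sq one_pos).const_mul (2 * π)⁻¹

theorem stmt2 (lam : ℝ) (hlam : 0 < lam) :
    ∫ x : ℝ, x * (phi x) ^ 2 * Phi (x / lam) =
      1 / (4 * Real.pi * Real.sqrt (1 + 2 * lam ^ 2)) := by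
  calc ∫ x, x * phi x ^ 2 * Phi (x / lam)
      = ∫ t, phi t * ((4 * π)⁻¹ * exp (-lam ^ 2 * t ^ 2)) := by
        simp_rw [integral_mul_Phi_div integrable_mul_phi_sq hlam, setIntegral_Ici_mul_phi_sq,
          mul_pow, neg_mul]
    _ = (4 * π)⁻¹ * ∫ t, phi t * exp (-lam ^ 2 * t ^ 2) := by
        simp_rw [mul_left_comm (phi _), integral_const_mul]
    _ = 1 / (4 * π * √(1 + 2 * lam ^ 2)) := by
        rw [integral_phi_mul_exp_neg_mul_sq]; field_simp
end

section
/- The influence function of Gini's mean difference g(F) = E_F|X−Y| at the standard normal distribution is IF(x) = 4φ(x) + 2x(2Φ(x) − 1) − 4/√π, i.e., the limit as ε ↓ 0 of (g((1−ε)N(0,1) + ε·δ_x) − g(N(0,1)))/ε equals this expression for every real x. -/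
open Real MeasureTheory ProbabilityTheory

/-- Gini's mean difference of a distribution `μ`: `E|X - Y|` for `X, Y` i.i.d. `~ μ`. -/
noncomputable def gini (μ : Measure ℝ) : ℝ :=
  ∫ p : ℝ × ℝ, |p.1 - p.2| ∂(μ.prod μ)

/-- The contaminated distribution `(1-ε)·N(0,1) + ε·δ_x`. -/
noncomputable def contam (ε x : ℝ) : Measure ℝ :=
  ENNReal.ofReal (1 - ε) • gaussianReal 0 1 + ENNReal.ofReal ε • Measure.dirac x

/-!
Expanding the product measure of the mixture `(1 - ε) • μ + ε • δ_x` bilinearly gives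
`g = (1 - ε)² g(μ) + 2ε(1 - ε) E_μ|X - x|`, so the influence function of Gini's mean
difference is `2 E_μ|X - x| - 2 g(μ)`. For the standard normal, `|u - x| = (u - x) + 2 (x - u)⁺`
together with `∫_{-∞}^x u φ(u) du = -φ(x)` gives `E|X - x| = 2φ(x) + x(2Φ(x) - 1)`, and since
`X - Y ~ N(0, 2)`, `g(N(0, 1)) = √2 E|X| = 2/√π`.
-/

open Filter Set Topology
open scoped NNReal ENNReal

lemma phi_eq_mul_exp_neg_mul_sq (u : ℝ) : phi u = 1 / √(2 * π) * rexp (-(1 / 2) * u ^ 2) := by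
  rw [phi]
  congr 2
  ring

lemma gaussianPDFReal_zero_one : gaussianPDFReal 0 1 = phi := by
  ext u
  simp [gaussianPDFReal, phi]

lemma hasDerivAt_phi (u : ℝ) : HasDerivAt phi (-(u * phi u)) u := by
  have h : HasDerivAt (fun t : ℝ => -t ^ 2 / 2) (-u) u :=
    ((hasDerivAt_pow 2 u).neg.div_const 2).congr_deriv (by ring)
  exact (h.exp.const_mul (1 / √(2 * π))).congr_deriv (by rw [phi]; ring)

lemma tendsto_phi_cocompact : Tendsto phi (cocompact ℝ) (𝓝 0) := by
  have h := (tendsto_rpow_abs_mul_exp_neg_mul_sq_cocompact (by norm_num : (0 : ℝ) < 1 / 2)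
    0).const_mul (1 / √(2 * π))
  rw [mul_zero] at h
  refine h.congr fun u => ?_
  rw [phi_eq_mul_exp_neg_mul_sq, Real.rpow_zero, one_mul]

lemma integrable_mul_phi : Integrable fun u => u * phi u := by
  simpa [phi_eq_mul_exp_neg_mul_sq, mul_left_comm] using
    (integrable_mul_exp_neg_mul_sq (by norm_num : (0 : ℝ) < 1 / 2)).const_mul (1 / √(2 * π))

lemma setIntegral_Iic_mul_phi (x : ℝ) : ∫ u in Iic x, u * phi u = -phi x := by
  have h := integral_Iic_of_hasDerivAt_of_tendsto' (a := x) (fun u _ => (hasDerivAt_phi u).neg)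
    (by simpa using integrable_mul_phi.integrableOn)
    (tendsto_phi_cocompact.mono_left atBot_le_cocompact).neg
  simpa using h

lemma setIntegral_gaussianReal_eq_setIntegral_phi_mul {s : Set ℝ} (hs : MeasurableSet s)
    (f : ℝ → ℝ) :
    ∫ u in s, f u ∂gaussianReal 0 1 = ∫ u in s, phi u * f u := by
  rw [← integral_indicator hs, ← integral_indicator hs,
    integral_gaussianReal_eq_integral_smul one_ne_zero, gaussianPDFReal_zero_one]
  congr with u
  by_cases hu : u ∈ s <;> simp [hu]

lemma setIntegral_Iic_sub_gaussianReal (x : ℝ) :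
    ∫ u in Iic x, (x - u) ∂gaussianReal 0 1 = x * Phi x + phi x := by
  have hphi : Integrable phi := gaussianPDFReal_zero_one ▸ integrable_gaussianPDFReal 0 1
  rw [setIntegral_gaussianReal_eq_setIntegral_phi_mul measurableSet_Iic]
  have : ∀ u, phi u * (x - u) = x * phi u - u * phi u := fun u => by ring
  simp_rw [this]
  rw [integral_sub (hphi.const_mul x).integrableOn integrable_mul_phi.integrableOn,
    integral_const_mul, setIntegral_Iic_mul_phi, Phi, sub_neg_eq_add]

lemma integral_abs_sub_gaussianReal (x : ℝ) :
    ∫ u, |u - x| ∂gaussianReal 0 1 = 2 * phi x + x * (2 * Phi x - 1) := by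
  have hid : Integrable (fun u => u) (gaussianReal 0 1) :=
    (memLp_id_gaussianReal 1).integrable le_rfl
  have hsplit : ∀ u, |u - x| = (u - x) + 2 * (Iic x).indicator (fun u => x - u) u := by
    intro u
    by_cases hu : u ≤ x
    · rw [abs_of_nonpos (sub_nonpos.2 hu), indicator_of_mem (mem_Iic.2 hu)]
      ring
    · simp [hu, abs_of_pos (sub_pos.2 (not_le.1 hu))]
  have hind : Integrable (fun u => (Iic x).indicator (fun u => x - u) u) (gaussianReal 0 1) :=
    ((integrable_const x).sub hid).indicator measurableSet_Iic
  simp_rw [hsplit]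
  rw [integral_add (hid.sub' (integrable_const x)) (hind.const_mul 2),
    integral_sub hid (integrable_const x), integral_const_mul,
    integral_indicator measurableSet_Iic, setIntegral_Iic_sub_gaussianReal]
  simp only [integral_id_gaussianReal, integral_const, probReal_univ, smul_eq_mul, one_mul,
    zero_sub]
  ring

lemma two_mul_phi_zero : 2 * phi 0 = √(2 / π) := by
  have h2π : √(2 * π) = √2 * √π := sqrt_mul zero_le_two π
  have hπ : 0 < √π := sqrt_pos.2 pi_pos
  rw [phi, sqrt_div zero_le_two, h2π]
  field_simp
  simp [Real.sq_sqrt, mul_comm]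

lemma integral_abs_gaussianReal (v : ℝ≥0) : ∫ u, |u| ∂gaussianReal 0 v = √(2 * v / π) := by
  have hmap : (gaussianReal 0 1).map (√v * ·) = gaussianReal 0 v := by
    rw [gaussianReal_map_const_mul, mul_zero, mul_one]
    congr
    exact sq_sqrt v.coe_nonneg
  have hstd : ∫ u, |u| ∂gaussianReal 0 1 = 2 * phi 0 := by
    simpa using integral_abs_sub_gaussianReal 0
  rw [← hmap, integral_map (by fun_prop) continuous_abs.aestronglyMeasurable]
  simp_rw [abs_mul, abs_of_nonneg (sqrt_nonneg _)]
  rw [integral_const_mul, hstd, two_mul_phi_zero, ← sqrt_mul v.coe_nonneg]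
  congr 1
  ring

lemma map_sub_prod_eq_conv_map_neg (μ ν : Measure ℝ) [SFinite μ] [SFinite ν] :
    (μ.prod ν).map (fun p => p.1 - p.2) = μ ∗ ν.map Neg.neg := by
  rw [Measure.conv, ← Measure.map_id (μ := μ),
    Measure.map_prod_map _ _ measurable_id measurable_neg,
    Measure.map_map (by fun_prop) (by fun_prop), Measure.map_id]
  rfl

lemma gini_gaussianReal (m : ℝ) (v : ℝ≥0) : gini (gaussianReal m v) = 2 * √(v / π) := by
  rw [gini, ← integral_map (by fun_prop) continuous_abs.aestronglyMeasurable,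
    map_sub_prod_eq_conv_map_neg, gaussianReal_map_neg, gaussianReal_conv_gaussianReal,
    add_neg_cancel, integral_abs_gaussianReal, NNReal.coe_add,
    show 2 * (v + v : ℝ) / π = 2 ^ 2 * (v / π) by ring, sqrt_mul (sq_nonneg 2),
    sqrt_sq zero_le_two]

lemma integral_add_prod_add {α : Type*} [MeasurableSpace α] {μ ν : Measure α} [SFinite μ]
    [SFinite ν] {f : α × α → ℝ} (hf : Integrable f ((μ + ν).prod (μ + ν))) :
    ∫ p, f p ∂((μ + ν).prod (μ + ν)) =
      ∫ p, f p ∂(μ.prod μ) + ∫ p, f p ∂(μ.prod ν) + ∫ p, f p ∂(ν.prod μ) +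
        ∫ p, f p ∂(ν.prod ν) := by
  rw [Measure.add_prod, Measure.prod_add, Measure.prod_add] at hf ⊢
  obtain ⟨⟨hμμ, hμν⟩, hνμ, hνν⟩ :=
    And.imp integrable_add_measure.1 integrable_add_measure.1 (integrable_add_measure.1 hf)
  rw [integral_add_measure (hμμ.add_measure hμν) (hνμ.add_measure hνν),
    integral_add_measure hμμ hμν, integral_add_measure hνμ hνν]
  ring

section FirstMoment

variable {μ : Measure ℝ} [IsFiniteMeasure μ]

lemma integrable_abs_sub_prod (hμ : Integrable (fun u => u) μ) :
    Integrable (fun p : ℝ × ℝ => |p.1 - p.2|) (μ.prod μ) :=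
  ((hμ.comp_fst μ).sub' (hμ.comp_snd μ)).abs

lemma gini_smul_add_smul_dirac (hμ : Integrable (fun u => u) μ) {a b : ℝ≥0∞} (ha : a ≠ ∞)
    (hb : b ≠ ∞) (x : ℝ) :
    gini (a • μ + b • Measure.dirac x) =
      a.toReal ^ 2 * gini μ + 2 * a.toReal * b.toReal * ∫ u, |u - x| ∂μ := by
  have := μ.smul_finite ha
  have := (Measure.dirac x).smul_finite hb
  have hmix : Integrable (fun u => u) (a • μ + b • Measure.dirac x) :=
    (hμ.smul_measure ha).add_measure ((integrable_dirac (by simp)).smul_measure hb)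
  rw [gini, integral_add_prod_add (integrable_abs_sub_prod hmix)]
  simp only [Measure.prod_smul_left, Measure.prod_smul_right, smul_smul]
  rw [Measure.dirac_prod_dirac, Measure.prod_dirac, Measure.dirac_prod]
  simp only [integral_smul_measure]
  rw [integral_map (by fun_prop) (by fun_prop), integral_map (by fun_prop) (by fun_prop),
    integral_dirac]
  simp only [sub_self, abs_zero, ENNReal.toReal_mul, smul_eq_mul, abs_sub_comm x]
  rw [← gini]
  ring

lemma tendsto_gini_contamination (hμ : Integrable (fun u => u) μ) (x : ℝ) :
    Tendsto
      (fun ε => (gini (ENNReal.ofReal (1 - ε) • μ + ENNReal.ofReal ε • Measure.dirac x) -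
        gini μ) / ε)
      (𝓝[>] 0) (𝓝 (2 * ∫ u, |u - x| ∂μ - 2 * gini μ)) := by
  set m := ∫ u, |u - x| ∂μ
  have hlim : Tendsto (fun ε : ℝ => (ε - 2) * gini μ + 2 * (1 - ε) * m) (𝓝[>] 0)
      (𝓝 (2 * m - 2 * gini μ)) := by
    refine (Continuous.tendsto' (by fun_prop) 0 _ ?_).mono_left nhdsWithin_le_nhds
    ring
  refine hlim.congr' ?_
  filter_upwards [Ioo_mem_nhdsGT one_pos] with ε ⟨hε₀, hε₁⟩
  rw [gini_smul_add_smul_dirac hμ ENNReal.ofReal_ne_top ENNReal.ofReal_ne_top,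
    ENNReal.toReal_ofReal (sub_nonneg.2 hε₁.le), ENNReal.toReal_ofReal hε₀.le]
  field_simp
  ring

end FirstMoment

theorem stmt19 (x : ℝ) :
    Filter.Tendsto (fun ε : ℝ => (gini (contam ε x) - gini (gaussianReal 0 1)) / ε)
      (nhdsWithin 0 (Set.Ioi 0))
      (nhds (4 * phi x + 2 * x * (2 * Phi x - 1) - 4 / Real.sqrt Real.pi)) := by
  have hIF : 4 * phi x + 2 * x * (2 * Phi x - 1) - 4 / √π =
      2 * ∫ u, |u - x| ∂gaussianReal 0 1 - 2 * gini (gaussianReal 0 1) := by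
    rw [integral_abs_sub_gaussianReal, gini_gaussianReal, NNReal.coe_one, one_div, sqrt_inv]
    ring
  rw [hIF]
  exact tendsto_gini_contamination ((memLp_id_gaussianReal 1).integrable le_rfl) x
end
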